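/- arXiv:2404.12613 — 3 statements merged into one kernel-verified Lean document; each statement's English description precedes it below -/
import Mathlib

section
/- Let x_1, ..., x_k be pairwise distinct complex numbers and let V_k be the k×k Vandermonde matrix with entries (V_k)_{i,j} = x_j^{i−1}. Then the maximum absolute row sum norm of its inverse satisfies ‖V_k^{−1}‖_∞ ≤ max_{1 ≤ j ≤ k} ∏_{i ≠ j} (1 + |x_i|)/|x_i − x_j|. -/
/-!
Row `j` of the inverse of the (transposed) Vandermonde matrix is the coefficient vector of the
Lagrange basis polynomial `ℓ_j = w_j ∏_{i ≠ j} (X - x_i)`, where `w_j = ∏_{i ≠ j} (x_j - x_i)⁻¹`.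
The `ℓ¹` norm of the coefficients grows by at most a factor `1 + |a|` under multiplication by
`X - a`, so the `j`-th absolute row sum is at most `|w_j| ∏_{i ≠ j} (1 + |x_i|)`.
-/

open Polynomial Finset
open scoped Matrix

/-- The operator norm induced by the `ℓ^∞` vector norm: maximum absolute row sum. -/
noncomputable def maxRowSumNorm {k : ℕ} (A : Matrix (Fin k) (Fin k) ℂ) : ℝ :=
  ⨆ i : Fin k, ∑ j : Fin k, ‖A i j‖

namespace Polynomial

variable {R : Type*}

theorem sum_range_norm_coeff_X_mul_le [SeminormedRing R] (q : R[X]) (n : ℕ) :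
    ∑ i ∈ range n, ‖(X * q).coeff i‖ ≤ ∑ i ∈ range n, ‖q.coeff i‖ := by
  cases n with
  | zero => simp
  | succ m =>
    rw [sum_range_succ', sum_range_succ]
    simp only [coeff_X_mul, mul_coeff_zero, coeff_X_zero, zero_mul, norm_zero, add_zero]
    exact le_add_of_nonneg_right (norm_nonneg _)

theorem sum_range_norm_coeff_X_sub_C_mul_le [SeminormedRing R] (a : R) (q : R[X]) (n : ℕ) :
    ∑ i ∈ range n, ‖((X - C a) * q).coeff i‖ ≤ (1 + ‖a‖) * ∑ i ∈ range n, ‖q.coeff i‖ :=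
  calc ∑ i ∈ range n, ‖((X - C a) * q).coeff i‖
      ≤ ∑ i ∈ range n, (‖(X * q).coeff i‖ + ‖a‖ * ‖q.coeff i‖) := by
        refine sum_le_sum fun i _ ↦ ?_
        rw [sub_mul, coeff_sub, coeff_C_mul]
        exact (norm_sub_le _ _).trans (add_le_add le_rfl (norm_mul_le a (q.coeff i)))
    _ ≤ (1 + ‖a‖) * ∑ i ∈ range n, ‖q.coeff i‖ := by
        rw [sum_add_distrib, ← mul_sum, add_mul, one_mul]
        exact add_le_add (sum_range_norm_coeff_X_mul_le q n) le_rfl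

end Polynomial

namespace Lagrange

theorem sum_range_norm_coeff_nodal_le {R ι : Type*} [SeminormedCommRing R] [NormOneClass R]
    (s : Finset ι) (v : ι → R) (n : ℕ) :
    ∑ i ∈ range n, ‖(nodal s v).coeff i‖ ≤ ∏ i ∈ s, (1 + ‖v i‖) := by
  classical
  induction s using Finset.induction_on with
  | empty =>
    rw [nodal_empty, prod_empty]
    simp only [coeff_one, apply_ite, norm_one, norm_zero, sum_ite_eq', mem_range]
    split_ifs <;> norm_num
  | insert a s ha ih =>
    rw [nodal_insert_eq_nodal ha, prod_insert ha]
    exact (Polynomial.sum_range_norm_coeff_X_sub_C_mul_le _ _ n).trans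
      (mul_le_mul_of_nonneg_left ih (by positivity))

theorem basis_eq_C_nodalWeight_mul_nodal_erase {F ι : Type*} [Field F] [DecidableEq ι]
    {s : Finset ι} (v : ι → F) {j : ι} (hj : j ∈ s) :
    Lagrange.basis s v j = C (nodalWeight s v j) * nodal (s.erase j) v := by
  rw [basis_eq_prod_sub_inv_mul_nodal_div hj, nodal_erase_eq_nodal_div hj]

theorem sum_range_norm_coeff_basis_le {F ι : Type*} [NormedField F] [DecidableEq ι]
    {s : Finset ι} (v : ι → F) {j : ι} (hj : j ∈ s) (n : ℕ) :
    ∑ i ∈ range n, ‖(Lagrange.basis s v j).coeff i‖ ≤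
      ∏ i ∈ s.erase j, (1 + ‖v i‖) / ‖v i - v j‖ :=
  calc ∑ i ∈ range n, ‖(Lagrange.basis s v j).coeff i‖
      = ‖nodalWeight s v j‖ * ∑ i ∈ range n, ‖(nodal (s.erase j) v).coeff i‖ := by
        simp only [basis_eq_C_nodalWeight_mul_nodal_erase v hj, coeff_C_mul, norm_mul, mul_sum]
    _ ≤ ‖nodalWeight s v j‖ * ∏ i ∈ s.erase j, (1 + ‖v i‖) := by
        gcongr
        exact sum_range_norm_coeff_nodal_le _ _ n
    _ = ∏ i ∈ s.erase j, (1 + ‖v i‖) / ‖v i - v j‖ := by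
        rw [nodalWeight, norm_prod, ← prod_mul_distrib]
        refine prod_congr rfl fun i _ ↦ ?_
        rw [norm_inv, norm_sub_rev, div_eq_inv_mul]

end Lagrange

theorem Matrix.inv_vandermonde_transpose {F : Type*} [Field F] {k : ℕ} {x : Fin k → F}
    (hx : Function.Injective x) :
    (Matrix.vandermonde x)ᵀ⁻¹ = Matrix.of fun j i : Fin k ↦ (Lagrange.basis univ x j).coeff i := by
  refine Matrix.inv_eq_left_inv ?_
  ext j l
  have hdeg : (Lagrange.basis univ x j).natDegree < k := by
    rw [Lagrange.natDegree_basis hx.injOn (mem_univ j), card_univ, Fintype.card_fin]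
    exact Nat.sub_one_lt_of_lt j.is_lt
  rw [Matrix.mul_apply]
  simp only [Matrix.of_apply, Matrix.transpose_apply, Matrix.vandermonde_apply]
  rw [Fin.sum_univ_eq_sum_range (fun i ↦ (Lagrange.basis univ x j).coeff i * x l ^ i),
    ← eval_eq_sum_range' hdeg]
  obtain rfl | hjl := eq_or_ne j l
  · rw [Lagrange.eval_basis_self hx.injOn (mem_univ j), Matrix.one_apply_eq]
  · rw [Lagrange.eval_basis_of_ne hjl (mem_univ l), Matrix.one_apply_ne hjl]

/-- **Gautschi's bound for the inverse of a Vandermonde matrix.**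
If `x₁,…,x_k` are pairwise distinct and `(V_k)_{i,j} = x_j^{i−1}`, then
`‖V_k⁻¹‖_∞ ≤ max_j ∏_{i ≠ j} (1+|x_i|)/|x_i − x_j|`. -/
theorem vandermonde_inverse_norm_bound (k : ℕ) (x : Fin k → ℂ)
    (hx : Function.Injective x)
    (V : Matrix (Fin k) (Fin k) ℂ) (hV : ∀ i j, V i j = x j ^ (i : ℕ)) :
    maxRowSumNorm V⁻¹ ≤
      ⨆ j : Fin k, ∏ i ∈ Finset.univ.erase j,
        (1 + ‖x i‖) / ‖x i - x j‖ := by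
  obtain rfl : V = (Matrix.vandermonde x)ᵀ := by
    ext i j
    rw [hV, Matrix.transpose_apply, Matrix.vandermonde_apply]
  rw [Matrix.inv_vandermonde_transpose hx, maxRowSumNorm]
  refine ciSup_mono (Set.finite_range _).bddAbove fun j ↦ ?_
  simp only [Matrix.of_apply]
  rw [Fin.sum_univ_eq_sum_range (fun i ↦ ‖(Lagrange.basis univ x j).coeff i‖)]
  exact Lagrange.sum_range_norm_coeff_basis_le x (mem_univ j) k
end

section
/- Let D ∈ ℂ^{(K+1)×k} have full column rank k, and Π ∈ ℂ^{k×k} be invertible diagonal. Then the k-th largest singular value of H = D Π Dᵀ satisfies σ_k(H) ≥ σ_*(D)² σ_*(Π), where σ_*(D) is the smallest singular value of D and σ_*(Π) = min_i |Π_{ii}|. -/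
/-!
By the Courant–Fischer max–min principle, `σ_k(H) ≥ c` as soon as `‖H x‖ ≥ c ‖x‖` on some
`k`-dimensional subspace. Take the range of `D̄ = (Dᵀ)ᴴ`: like `D`, the matrix `D̄` is bounded below
by `σ_*(D)`, so this range is `k`-dimensional once `σ_*(D) > 0` (otherwise the bound is trivial).
For `x = D̄ w`, Cauchy–Schwarz turns `‖x‖² = ⟪w, Dᵀ x⟫` into `‖Dᵀ x‖ ≥ σ_*(D) ‖x‖`; then
`|Π_ii| ≥ σ_*(Π)` and `‖D y‖ ≥ σ_*(D) ‖y‖` give `‖D Π Dᵀ x‖ ≥ σ_*(D)² σ_*(Π) ‖x‖`.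
-/

/-- The `l`-th largest singular value (0-based) of a complex `m × n` matrix. -/
noncomputable def singularValue {m n : ℕ} (A : Matrix (Fin m) (Fin n) ℂ) (l : Fin n) : ℝ :=
  Real.sqrt ((Matrix.isHermitian_conjTranspose_mul_self A).eigenvalues
    (Tuple.sort (Matrix.isHermitian_conjTranspose_mul_self A).eigenvalues l.rev))

open Matrix WithLp
open scoped InnerProductSpace

namespace Matrix.IsHermitian

variable {𝕜 n : Type*} [RCLike 𝕜] [Fintype n] [DecidableEq n] {M : Matrix n n 𝕜}
  (hM : M.IsHermitian)

theorem inner_eigenvectorBasis_toEuclideanLin (x : EuclideanSpace 𝕜 n) (i : n) :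
    ⟪hM.eigenvectorBasis i, toEuclideanLin M x⟫_𝕜 =
      hM.eigenvalues i * ⟪hM.eigenvectorBasis i, x⟫_𝕜 := by
  have hb : toEuclideanLin M (hM.eigenvectorBasis i) =
      (hM.eigenvalues i : 𝕜) • hM.eigenvectorBasis i := by
    simp only [toLpLin_apply, hM.mulVec_eigenvectorBasis i, RCLike.real_smul_eq_coe_smul (K := 𝕜)]
    rfl
  rw [← (isSymmetric_toEuclideanLin_iff.mpr hM) _ x, hb, inner_smul_left, RCLike.conj_ofReal]

theorem re_inner_toEuclideanLin (x : EuclideanSpace 𝕜 n) :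
    RCLike.re ⟪x, toEuclideanLin M x⟫_𝕜 =
      ∑ i, hM.eigenvalues i * ‖⟪hM.eigenvectorBasis i, x⟫_𝕜‖ ^ 2 := by
  rw [← hM.eigenvectorBasis.sum_inner_mul_inner, map_sum]
  refine Finset.sum_congr rfl fun i _ => ?_
  rw [hM.inner_eigenvectorBasis_toEuclideanLin, mul_left_comm, ← inner_conj_symm x,
    RCLike.conj_mul, ← RCLike.ofReal_pow, ← RCLike.ofReal_mul, RCLike.ofReal_re]

end Matrix.IsHermitian

theorem Submodule.exists_mem_ne_zero_of_card_lt_finrank {K V ι : Type*} [Field K]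
    [AddCommGroup V] [Module K V] [Fintype ι] (W : Submodule K V) [FiniteDimensional K W]
    (f : ι → Module.Dual K V) (h : Fintype.card ι < Module.finrank K W) :
    ∃ x ∈ W, x ≠ 0 ∧ ∀ i, f i x = 0 := by
  obtain ⟨⟨x, hxW⟩, hx, hx0⟩ := Submodule.exists_mem_ne_zero_of_ne_bot
    (LinearMap.ker_ne_bot_of_finrank_lt (f := LinearMap.pi fun i => (f i).comp W.subtype)
      (by simpa using h))
  exact ⟨x, hxW, by simpa using hx0, fun i => congrFun (LinearMap.mem_ker.mp hx) i⟩

theorem LinearMap.mul_norm_le_norm_adjoint_apply {𝕜 E F : Type*} [RCLike 𝕜]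
    [NormedAddCommGroup E] [InnerProductSpace 𝕜 E] [FiniteDimensional 𝕜 E]
    [NormedAddCommGroup F] [InnerProductSpace 𝕜 F] [FiniteDimensional 𝕜 F]
    (T : E →ₗ[𝕜] F) {c : ℝ} (hc : 0 ≤ c) (hT : ∀ w, c * ‖w‖ ≤ ‖T w‖) (w : E) :
    c * ‖T w‖ ≤ ‖T.adjoint (T w)‖ := by
  have hcs : ‖T w‖ ^ 2 ≤ ‖w‖ * ‖T.adjoint (T w)‖ := by
    rw [← inner_self_eq_norm_sq (𝕜 := 𝕜), ← T.adjoint_inner_right]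
    exact re_inner_le_norm _ _
  rcases (norm_nonneg (T w)).eq_or_lt with h0 | hpos
  · rw [← h0, mul_zero]
    exact norm_nonneg _
  refine le_of_mul_le_mul_right ?_ hpos
  nlinarith [mul_le_mul_of_nonneg_left hcs hc,
    mul_le_mul_of_nonneg_right (hT w) (norm_nonneg (T.adjoint (T w)))]

theorem EuclideanSpace.norm_toLp_star {𝕜 n : Type*} [RCLike 𝕜] [Fintype n] (v : n → 𝕜) :
    ‖toLp 2 (star v)‖ = ‖toLp 2 v‖ := by
  simp [EuclideanSpace.norm_eq]

namespace Matrix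

variable {𝕜 m n : Type*} [RCLike 𝕜] [Fintype m] [Fintype n] [DecidableEq n]

theorem iInf_norm_mul_norm_le_norm_toEuclideanLin_diagonal (d : n → 𝕜)
    (x : EuclideanSpace 𝕜 n) :
    (⨅ i, ‖d i‖) * ‖x‖ ≤ ‖toEuclideanLin (diagonal d) x‖ := by
  have hP : 0 ≤ ⨅ i, ‖d i‖ := Real.iInf_nonneg fun _ => norm_nonneg _
  rw [← pow_le_pow_iff_left₀ (by positivity) (norm_nonneg _) two_ne_zero, mul_pow,
    EuclideanSpace.norm_sq_eq, EuclideanSpace.norm_sq_eq, Finset.mul_sum]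
  refine Finset.sum_le_sum fun i _ => ?_
  simp only [toLpLin_apply, PiLp.toLp_apply, mulVec_diagonal, norm_mul, mul_pow]
  gcongr
  exact ciInf_le (Finite.bddBelow_range _) i

theorem mul_norm_le_norm_toEuclideanLin_conjTranspose_transpose (A : Matrix m n 𝕜) {c : ℝ}
    (hA : ∀ w, c * ‖w‖ ≤ ‖toEuclideanLin A w‖) (w : EuclideanSpace 𝕜 n) :
    c * ‖w‖ ≤ ‖toEuclideanLin Aᵀᴴ w‖ := by
  have hw : toEuclideanLin Aᵀᴴ w = toLp 2 (star (A *ᵥ star (ofLp w))) := by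
    rw [toLpLin_apply, mulVec_conjTranspose, vecMul_transpose]
  simpa [hw, EuclideanSpace.norm_toLp_star] using hA (toLp 2 (star (ofLp w)))

variable [DecidableEq m]

theorem norm_toEuclideanLin_sq (A : Matrix m n 𝕜) (x : EuclideanSpace 𝕜 n) :
    ‖toEuclideanLin A x‖ ^ 2 = ∑ i, (isHermitian_conjTranspose_mul_self A).eigenvalues i *
      ‖⟪(isHermitian_conjTranspose_mul_self A).eigenvectorBasis i, x⟫_𝕜‖ ^ 2 := by
  rw [← (isHermitian_conjTranspose_mul_self A).re_inner_toEuclideanLin, toLpLin_mul_same,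
    LinearMap.comp_apply, toEuclideanLin_conjTranspose_eq_adjoint, LinearMap.adjoint_inner_right,
    inner_self_eq_norm_sq]

theorem mul_norm_sq_le_norm_toEuclideanLin_sq (A : Matrix m n 𝕜) {μ : ℝ}
    (hμ : ∀ i, μ ≤ (isHermitian_conjTranspose_mul_self A).eigenvalues i)
    (x : EuclideanSpace 𝕜 n) :
    μ * ‖x‖ ^ 2 ≤ ‖toEuclideanLin A x‖ ^ 2 := by
  rw [A.norm_toEuclideanLin_sq,
    ← (isHermitian_conjTranspose_mul_self A).eigenvectorBasis.sum_sq_norm_inner_right x,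
    Finset.mul_sum]
  exact Finset.sum_le_sum fun i _ => mul_le_mul_of_nonneg_right (hμ i) (by positivity)

theorem norm_toEuclideanLin_sq_le (A : Matrix m n 𝕜) {μ : ℝ} (x : EuclideanSpace 𝕜 n)
    (hμ : ∀ i, ⟪(isHermitian_conjTranspose_mul_self A).eigenvectorBasis i, x⟫_𝕜 ≠ 0 →
      (isHermitian_conjTranspose_mul_self A).eigenvalues i ≤ μ) :
    ‖toEuclideanLin A x‖ ^ 2 ≤ μ * ‖x‖ ^ 2 := by
  rw [A.norm_toEuclideanLin_sq,
    ← (isHermitian_conjTranspose_mul_self A).eigenvectorBasis.sum_sq_norm_inner_right x,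
    Finset.mul_sum]
  refine Finset.sum_le_sum fun i _ => ?_
  by_cases hi : ⟪(isHermitian_conjTranspose_mul_self A).eigenvectorBasis i, x⟫_𝕜 = 0
  · simp [hi]
  · exact mul_le_mul_of_nonneg_right (hμ i hi) (by positivity)

end Matrix

section SingularValue

variable {m n : ℕ} (A : Matrix (Fin m) (Fin n) ℂ)

theorem singularValue_nonneg (l : Fin n) : 0 ≤ singularValue A l :=
  Real.sqrt_nonneg _

theorem sq_singularValue (l : Fin n) :
    singularValue A l ^ 2 = (isHermitian_conjTranspose_mul_self A).eigenvalues
      (Tuple.sort (isHermitian_conjTranspose_mul_self A).eigenvalues l.rev) :=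
  Real.sq_sqrt (eigenvalues_conjTranspose_mul_self_nonneg A _)

theorem singularValue_mul_norm_le (l : Fin n) (hl : (l : ℕ) + 1 = n)
    (x : EuclideanSpace ℂ (Fin n)) :
    singularValue A l * ‖x‖ ≤ ‖toEuclideanLin A x‖ := by
  set G := isHermitian_conjTranspose_mul_self A
  have hmin : ∀ i, singularValue A l ^ 2 ≤ G.eigenvalues i := fun i => by
    rw [sq_singularValue, ← (Tuple.sort G.eigenvalues).apply_symm_apply i]
    exact Tuple.monotone_sort G.eigenvalues (Fin.le_def.mpr (by simp [Fin.val_rev]; omega))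
  rw [← pow_le_pow_iff_left₀ (mul_nonneg (singularValue_nonneg A l) (norm_nonneg _))
    (norm_nonneg _) two_ne_zero, mul_pow]
  exact A.mul_norm_sq_le_norm_toEuclideanLin_sq hmin x

/-- One half of the Courant–Fischer max–min characterisation of singular values. -/
theorem le_singularValue_of_mul_norm_le (l : Fin n)
    (V : Submodule ℂ (EuclideanSpace ℂ (Fin n))) (hV : (l : ℕ) < Module.finrank ℂ V)
    {c : ℝ} (hc : ∀ x ∈ V, c * ‖x‖ ≤ ‖toEuclideanLin A x‖) :
    c ≤ singularValue A l := by
  set G := isHermitian_conjTranspose_mul_self A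
  set τ := Tuple.sort G.eigenvalues
  -- `x ∈ V` is orthogonal to the eigenvectors of the `l` largest eigenvalues of `Aᴴ A`.
  obtain ⟨x, hxV, hx0, hx⟩ := V.exists_mem_ne_zero_of_card_lt_finrank
    (fun j : Finset.Ioi l.rev => innerₛₗ ℂ (G.eigenvectorBasis (τ j)))
    (by rw [Fintype.card_coe, Fin.card_Ioi, Fin.val_rev]; omega)
  have hup : ‖toEuclideanLin A x‖ ^ 2 ≤ singularValue A l ^ 2 * ‖x‖ ^ 2 := by
    refine A.norm_toEuclideanLin_sq_le x fun i hi => ?_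
    rw [sq_singularValue, ← τ.apply_symm_apply i]
    refine Tuple.monotone_sort G.eigenvalues (not_lt.mp fun hlt => hi ?_)
    simpa using hx ⟨τ.symm i, Finset.mem_Ioi.mpr hlt⟩
  have hxpos : 0 < ‖x‖ := norm_pos_iff.mpr hx0
  rcases le_or_gt c 0 with hc0 | hc0
  · exact hc0.trans (singularValue_nonneg A l)
  rw [← pow_le_pow_iff_left₀ hc0.le (singularValue_nonneg A l) two_ne_zero]
  refine le_of_mul_le_mul_right ?_ (pow_pos hxpos 2)
  calc c ^ 2 * ‖x‖ ^ 2 = (c * ‖x‖) ^ 2 := by ring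
    _ ≤ ‖toEuclideanLin A x‖ ^ 2 := pow_le_pow_left₀ (by positivity) (hc x hxV) 2
    _ ≤ _ := hup

end SingularValue

/-- **Lower bound for the `k`-th singular value of `H = D Π Dᵀ`.**
If `D ∈ ℂ^{(K+1)×k}` has full column rank `k` and `Π` is an invertible diagonal matrix,
then `σ_k(H) ≥ σ_*(D)² σ_*(Π)` where `σ_*(D)` is the smallest singular value of `D`
and `σ_*(Π) = min_i |Π_{ii}|`. -/
theorem singular_value_DPiDT_lower_bound (k K : ℕ) (hk : 0 < k) (hKk : k ≤ K + 1)
    (D : Matrix (Fin (K + 1)) (Fin k) ℂ)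
    (π : Fin k → ℂ) :
    (singularValue D ⟨k - 1, by omega⟩) ^ 2 * (⨅ i : Fin k, ‖π i‖) ≤
      singularValue (D * Matrix.diagonal π * D.transpose) ⟨k - 1, by omega⟩ := by
  set σ := singularValue D ⟨k - 1, by omega⟩
  set P := ⨅ i : Fin k, ‖π i‖
  have hσ : 0 ≤ σ := singularValue_nonneg D _
  have hP : 0 ≤ P := Real.iInf_nonneg fun _ => norm_nonneg _
  have hD : ∀ w, σ * ‖w‖ ≤ ‖toEuclideanLin D w‖ :=
    singularValue_mul_norm_le D _ (Nat.sub_add_cancel hk)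
  set E := toEuclideanLin Dᵀᴴ
  have hE : ∀ w, σ * ‖w‖ ≤ ‖E w‖ := D.mul_norm_le_norm_toEuclideanLin_conjTranspose_transpose hD
  rcases hσ.eq_or_lt with hσ0 | hσpos
  · rw [← hσ0, zero_pow two_ne_zero, zero_mul]
    exact singularValue_nonneg _ _
  have hE_inj : Function.Injective E := (injective_iff_map_eq_zero E).mpr fun w hw =>
    norm_eq_zero.mp (le_antisymm
      (nonpos_of_mul_nonpos_right (by simpa [hw] using hE w) hσpos) (norm_nonneg w))
  refine le_singularValue_of_mul_norm_le _ _ (LinearMap.range E)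
    (by rw [LinearMap.finrank_range_of_inj hE_inj, finrank_euclideanSpace_fin]
        exact Nat.sub_lt hk Nat.one_pos) ?_
  rintro _ ⟨w, rfl⟩
  have hDT : σ * ‖E w‖ ≤ ‖toEuclideanLin Dᵀ (E w)‖ := by
    simpa [E, toEuclideanLin_conjTranspose_eq_adjoint] using
      E.mul_norm_le_norm_adjoint_apply hσ hE w
  calc σ ^ 2 * P * ‖E w‖ = σ * (P * (σ * ‖E w‖)) := by ring
    _ ≤ σ * (P * ‖toEuclideanLin Dᵀ (E w)‖) := by gcongr
    _ ≤ σ * ‖toEuclideanLin (diagonal π) (toEuclideanLin Dᵀ (E w))‖ := by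
        gcongr
        exact iInf_norm_mul_norm_le_norm_toEuclideanLin_diagonal π _
    _ ≤ ‖toEuclideanLin (D * diagonal π * Dᵀ) (E w)‖ := by
        simpa only [toLpLin_mul_same, LinearMap.comp_apply] using hD _
end

section
/- Let μ_1 < μ_2 < ... < μ_k be real numbers in [−π/(2h), π/(2h)) with minimum separation d_min (h > 0). Then for each j, ∏_{i ≠ j} |e^{iμ_i h} − e^{iμ_j h}|/2 ≥ (h d_min/π)^{k−1} (j−1)!(k−j)!. -/
open Complex Finset
open scoped Nat

/-!
With `x_i = μ_i h ∈ [-π/2, π/2)`, each chord `|e^{i x_i} - e^{i x_j}| = 2 |sin ((x_i - x_j) / 2)|`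
is at least `(2/π) |x_i - x_j|` by Jordan's inequality, as `|x_i - x_j| ≤ π`. Ordered points with
mutual gaps at least `d` satisfy `|μ_i - μ_j| ≥ d |i - j|`, and `∏_{i ≠ j} |i - j| = j! (k-1-j)!`.
-/

theorem prod_erase_eq_prod_Iio_mul_prod_Ioi {α M : Type*} [LinearOrder α] [Fintype α]
    [LocallyFiniteOrderBot α] [LocallyFiniteOrderTop α] [CommMonoid M] (f : α → M) (j : α) :
    ∏ i ∈ univ.erase j, f i = (∏ i ∈ Iio j, f i) * ∏ i ∈ Ioi j, f i := by
  have hsplit : univ.erase j = Iio j ∪ Ioi j := by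
    ext i
    simp
  rw [hsplit,
    prod_union (disjoint_left.2 fun _ hlt hgt => lt_asymm (mem_Iio.1 hlt) (mem_Ioi.1 hgt))]

theorem Fin.prod_dist_erase_eq_factorial_mul_factorial {k : ℕ} (j : Fin k) :
    ∏ i ∈ univ.erase j, Nat.dist i j = (j : ℕ)! * (k - 1 - j)! := by
  rw [prod_erase_eq_prod_Iio_mul_prod_Ioi]
  congr 1
  · calc ∏ i ∈ Iio j, Nat.dist i j = ∏ n ∈ Iio (j : ℕ), (j - n : ℕ) := by
          rw [← Fin.map_valEmbedding_Iio, prod_map]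
          exact prod_congr rfl fun i hi => Nat.dist_eq_sub_of_le (mem_Iio.1 hi).le
      _ = (j : ℕ)! := by
          rw [Nat.Iio_eq_range, ← Nat.descFactorial_eq_prod_range, Nat.descFactorial_self]
  · calc ∏ i ∈ Ioi j, Nat.dist i j = ∏ n ∈ Ico (j + 1 : ℕ) k, (n - j : ℕ) := by
          rw [Ico_add_one_left_eq_Ioo, ← Fin.map_valEmbedding_Ioi, prod_map]
          exact prod_congr rfl fun i hi => Nat.dist_eq_sub_of_le_right (mem_Ioi.1 hi).le
      _ = (k - 1 - j)! := by
          rw [prod_Ico_eq_prod_range, ← prod_range_add_one_eq_factorial]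
          refine prod_congr (by congr 1; omega) fun n _ => by omega

theorem Fin.mul_sub_le_sub_of_gap {k : ℕ} {d : ℝ} {μ : Fin k → ℝ}
    (hgap : ∀ i j, i < j → d ≤ μ j - μ i) :
    ∀ n : ℕ, ∀ i j : Fin k, (i : ℕ) + n = j → d * n ≤ μ j - μ i
  | 0, i, j, hij => by simp [Fin.ext (by simpa using hij)]
  | n + 1, i, j, hij => by
    let m : Fin k := ⟨i + n, by omega⟩
    have hmj : m < j := Fin.lt_def.2 (by simp [m]; omega)
    have := Fin.mul_sub_le_sub_of_gap hgap n i m rfl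
    have := hgap m j hmj
    push_cast
    linarith

theorem StrictMono.mul_dist_le_abs_sub {k : ℕ} {d : ℝ} {μ : Fin k → ℝ} (hmono : StrictMono μ)
    (hsep : ∀ i j : Fin k, i ≠ j → d ≤ |μ i - μ j|) (i j : Fin k) :
    d * Nat.dist i j ≤ |μ i - μ j| := by
  have hgap : ∀ i j, i < j → d ≤ μ j - μ i := fun i j hij => by
    simpa [abs_of_pos (sub_pos.2 (hmono hij))] using hsep j i hij.ne'
  rcases le_total i j with hij | hji
  · rw [Nat.dist_eq_sub_of_le hij, abs_sub_comm, abs_of_nonneg (sub_nonneg.2 (hmono.monotone hij))]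
    exact Fin.mul_sub_le_sub_of_gap hgap _ i j (by omega)
  · rw [Nat.dist_eq_sub_of_le_right hji, abs_of_nonneg (sub_nonneg.2 (hmono.monotone hji))]
    exact Fin.mul_sub_le_sub_of_gap hgap _ j i (by omega)

theorem norm_exp_I_mul_sub_exp_I_mul (x y : ℝ) :
    ‖exp (I * x) - exp (I * y)‖ = 2 * |Real.sin ((x - y) / 2)| := by
  have hfactor : exp (I * x) - exp (I * y) = exp (I * y) * (exp (I * ↑(x - y)) - 1) := by
    rw [mul_sub, mul_one, ← exp_add]
    push_cast
    ring_nf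
  rw [hfactor, norm_mul, norm_exp_I_mul_ofReal, one_mul, norm_exp_I_mul_ofReal_sub_one, norm_mul,
    Real.norm_two, Real.norm_eq_abs]

theorem two_div_pi_mul_abs_sub_le_norm_exp_I_mul_sub {x y : ℝ} (hxy : |x - y| ≤ Real.pi) :
    2 / Real.pi * |x - y| ≤ ‖exp (I * x) - exp (I * y)‖ := by
  have hhalf : |(x - y) / 2| ≤ Real.pi / 2 := by
    rw [abs_div, abs_two]
    linarith
  have hjordan := Real.mul_abs_le_abs_sin hhalf
  rw [abs_div, abs_two] at hjordan
  rw [norm_exp_I_mul_sub_exp_I_mul]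
  linarith

theorem div_pi_mul_abs_sub_le_half_norm_exp_I_mul_sub {x y h : ℝ} (hh : 0 < h)
    (hx : |x * h| ≤ Real.pi / 2) (hy : |y * h| ≤ Real.pi / 2) :
    h / Real.pi * |x - y| ≤ ‖exp (I * x * h) - exp (I * y * h)‖ / 2 := by
  have hcast : ∀ z : ℝ, I * z * h = I * ↑(z * h) := fun z => by push_cast; ring
  have hchord := two_div_pi_mul_abs_sub_le_norm_exp_I_mul_sub (x := x * h) (y := y * h)
    (by linarith [abs_sub (x * h) (y * h)])
  rw [← sub_mul, abs_mul, abs_of_pos hh] at hchord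
  rw [hcast, hcast]
  calc h / Real.pi * |x - y| = 2 / Real.pi * (|x - y| * h) / 2 := by ring
    _ ≤ _ := by gcongr

/-- The index `j` is `0`-based: the paper's `(j-1)! (k-j)!` reads `j! (k-1-j)!` here. -/
theorem prod_chord_lengths_lower_bound (k : ℕ) (h d : ℝ) (hh : 0 < h) (hd : 0 < d)
    (μ : Fin k → ℝ) (hmono : StrictMono μ)
    (hrange : ∀ i, μ i ∈ Set.Ico (-(Real.pi / (2 * h))) (Real.pi / (2 * h)))
    (hsep : ∀ i j : Fin k, i ≠ j → d ≤ |μ i - μ j|) :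
    ∀ j : Fin k,
      (h * d / Real.pi) ^ (k - 1) * (Nat.factorial j) * (Nat.factorial (k - 1 - j)) ≤
        ∏ i ∈ Finset.univ.erase j,
          ‖Complex.exp (Complex.I * μ i * h) - Complex.exp (Complex.I * μ j * h)‖ / 2 := by
  intro j
  have hscaled : ∀ i, |μ i * h| ≤ Real.pi / 2 := fun i => by
    rw [abs_mul, abs_of_pos hh, ← le_div_iff₀ hh, div_div]
    exact abs_le.2 ⟨(hrange i).1, (hrange i).2.le⟩
  have hfactor : ∀ i : Fin k, h * d / Real.pi * Nat.dist i j ≤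
      ‖exp (I * μ i * h) - exp (I * μ j * h)‖ / 2 := fun i =>
    calc h * d / Real.pi * Nat.dist i j = h / Real.pi * (d * Nat.dist i j) := by ring
      _ ≤ h / Real.pi * |μ i - μ j| := by
        gcongr
        exact hmono.mul_dist_le_abs_sub hsep i j
      _ ≤ _ := div_pi_mul_abs_sub_le_half_norm_exp_I_mul_sub hh (hscaled i) (hscaled j)
  calc (h * d / Real.pi) ^ (k - 1) * (j ! : ℝ) * ((k - 1 - j)! : ℝ)
      = ∏ i ∈ univ.erase j, h * d / Real.pi * Nat.dist i j := by
        rw [prod_mul_distrib, prod_const, card_erase_of_mem (mem_univ j), card_univ,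
          Fintype.card_fin, ← Nat.cast_prod, Fin.prod_dist_erase_eq_factorial_mul_factorial,
          mul_assoc]
        push_cast
        ring
    _ ≤ _ := prod_le_prod (fun i _ => by positivity) fun i _ => hfactor i
end
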